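/- arXiv:1003.0985 — 2 statements merged into one kernel-verified Lean document; each statement's English description precedes it below -/
import Mathlib

section
/- Let E be a simplicial commutative k-algebra whose Moore complex satisfies NE_4 = 0. Then for all x_1 ∈ NE_1 and y_3 ∈ NE_3 the following identity holds in E_3: s_2 s_1 x_1 · (s_0 d_3 y_3 − s_1 d_3 y_3 + s_2 d_3 y_3 − y_3) = 0. -/
/-- A simplicial commutative `k`-algebra: a family of commutative `k`-algebras
`obj n` together with face algebra homomorphisms `d n i : obj (n+1) →ₐ[k] obj n`
(representing `d_i : E_{n+1} → E_n`, `0 ≤ i ≤ n+1`) and degeneracy algebra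
homomorphisms `s n i : obj n →ₐ[k] obj (n+1)` (representing
`s_i : E_n → E_{n+1}`, `0 ≤ i ≤ n`), satisfying the simplicial identities. -/
structure SimplicialCommAlg (k : Type*) [CommRing k]
    (obj : ℕ → Type*) [∀ n, CommRing (obj n)] [∀ n, Algebra k (obj n)] where
  d : (n : ℕ) → ℕ → (obj (n + 1) →ₐ[k] obj n)
  s : (n : ℕ) → ℕ → (obj n →ₐ[k] obj (n + 1))
  dd : ∀ (n i j : ℕ), i < j → j ≤ n + 2 →
    (d n i).comp (d (n + 1) j) = (d n (j - 1)).comp (d (n + 1) i)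
  ds_lt : ∀ (m i j : ℕ), i < j → j ≤ m + 1 →
    (d (m + 1) i).comp (s (m + 1) j) = (s m (j - 1)).comp (d m i)
  ds_self : ∀ (n j : ℕ), j ≤ n → (d n j).comp (s n j) = AlgHom.id k (obj n)
  ds_succ : ∀ (n j : ℕ), j ≤ n → (d n (j + 1)).comp (s n j) = AlgHom.id k (obj n)
  ds_gt : ∀ (m i j : ℕ), j + 1 < i → i ≤ m + 2 →
    (d (m + 1) i).comp (s (m + 1) j) = (s m j).comp (d m (i - 1))
  ss : ∀ (n i j : ℕ), i ≤ j → j ≤ n →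
    (s (n + 1) i).comp (s n j) = (s (n + 1) (j + 1)).comp (s n i)

/-!
Put `a = s₂ s₁ x₁` and `z = s₀ d₃ y₃ - s₁ d₃ y₃ + s₂ d₃ y₃ - y₃`. Then `d₀ a = 0`, while `z` is
killed by `d₁, d₂, d₃`. For such a pair, `w = s₃ a · (s₃ z - s₂ z + s₁ z - s₀ z)` lies in
`NE₄ = 0`, and its last face is `d₄ w = a · z`.
-/

namespace SimplicialCommAlg

variable {k : Type*} [CommRing k] {obj : ℕ → Type*} [∀ n, CommRing (obj n)]
  [∀ n, Algebra k (obj n)] (E : SimplicialCommAlg k obj)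

theorem d_d_apply {n i j : ℕ} (hij : i < j) (hj : j ≤ n + 2) (x : obj (n + 2)) :
    E.d n i (E.d (n + 1) j x) = E.d n (j - 1) (E.d (n + 1) i x) :=
  AlgHom.congr_fun (E.dd n i j hij hj) x

theorem d_s_of_lt_apply {m i j : ℕ} (hij : i < j) (hj : j ≤ m + 1) (x : obj (m + 1)) :
    E.d (m + 1) i (E.s (m + 1) j x) = E.s m (j - 1) (E.d m i x) :=
  AlgHom.congr_fun (E.ds_lt m i j hij hj) x

theorem d_s_self_apply {n j : ℕ} (hj : j ≤ n) (x : obj n) : E.d n j (E.s n j x) = x :=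
  AlgHom.congr_fun (E.ds_self n j hj) x

theorem d_succ_s_apply {n j : ℕ} (hj : j ≤ n) (x : obj n) : E.d n (j + 1) (E.s n j x) = x :=
  AlgHom.congr_fun (E.ds_succ n j hj) x

theorem d_s_of_gt_apply {m i j : ℕ} (hij : j + 1 < i) (hi : i ≤ m + 2) (x : obj (m + 1)) :
    E.d (m + 1) i (E.s (m + 1) j x) = E.s m j (E.d m (i - 1) x) :=
  AlgHom.congr_fun (E.ds_gt m i j hij hi) x

theorem d_zero_s_s_eq_zero {x : obj 1} (hx : E.d 0 0 x = 0) : E.d 2 0 (E.s 2 2 (E.s 1 1 x)) = 0 := by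
  simp (disch := omega) only [d_s_of_lt_apply, hx, map_zero]

theorem faces_alternating_degeneracies_sub_eq_zero {y : obj 3}
    (hy₁ : E.d 2 1 y = 0) (hy₂ : E.d 2 2 y = 0) :
    let b := E.d 2 3 y
    let z := E.s 2 0 b - E.s 2 1 b + E.s 2 2 b - y
    E.d 2 1 z = 0 ∧ E.d 2 2 z = 0 ∧ E.d 2 3 z = 0 := by
  intro b z
  have hb₁ : E.d 1 1 b = 0 := by rw [E.d_d_apply (by omega) (by omega), hy₁, map_zero]
  have hb₂ : E.d 1 2 b = 0 := by rw [E.d_d_apply (by omega) (by omega), hy₂, map_zero]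
  refine ⟨?_, ?_, ?_⟩ <;>
    simp (disch := omega) only [z, map_sub, map_add, d_s_self_apply, d_succ_s_apply,
      d_s_of_lt_apply, d_s_of_gt_apply, hb₁, hb₂, hy₁, hy₂, map_zero] <;>
    simp [b]

theorem mul_eq_zero_of_moore_four_trivial
    (hNE4 : ∀ w : obj 4, E.d 3 0 w = 0 → E.d 3 1 w = 0 →
      E.d 3 2 w = 0 → E.d 3 3 w = 0 → w = 0)
    {a z : obj 3} (ha : E.d 2 0 a = 0)
    (hz₁ : E.d 2 1 z = 0) (hz₂ : E.d 2 2 z = 0) (hz₃ : E.d 2 3 z = 0) : a * z = 0 := by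
  set w := E.s 3 3 a * (E.s 3 3 z - E.s 3 2 z + E.s 3 1 z - E.s 3 0 z)
  have hw : w = 0 := by
    apply hNE4 <;>
      simp (disch := omega) only [w, map_mul, map_sub, map_add, d_s_self_apply, d_succ_s_apply,
        d_s_of_lt_apply, d_s_of_gt_apply, ha, hz₁, hz₂, map_zero] <;>
      simp
  have hw₄ : E.d 3 4 w = a * z := by
    simp (disch := omega) only [w, map_mul, map_sub, map_add, d_succ_s_apply, d_s_of_gt_apply, hz₃,
      map_zero]
    simp
  rw [← hw₄, hw, map_zero]

end SimplicialCommAlg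

theorem stmt_6 {k : Type*} [CommRing k] {obj : ℕ → Type*}
    [∀ n, CommRing (obj n)] [∀ n, Algebra k (obj n)]
    (E : SimplicialCommAlg k obj)
    (hNE4 : ∀ w : obj 4, E.d 3 0 w = 0 → E.d 3 1 w = 0 →
      E.d 3 2 w = 0 → E.d 3 3 w = 0 → w = 0)
    (x1 : obj 1) (hx1 : E.d 0 0 x1 = 0) (y3 : obj 3) (hy3 : E.d 2 0 y3 = 0 ∧ E.d 2 1 y3 = 0 ∧ E.d 2 2 y3 = 0) :
    E.s 2 2 (E.s 1 1 x1) *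
      (E.s 2 0 (E.d 2 3 y3) - E.s 2 1 (E.d 2 3 y3) + E.s 2 2 (E.d 2 3 y3) - y3) = 0 := by
  obtain ⟨-, hy₁, hy₂⟩ := hy3
  obtain ⟨hz₁, hz₂, hz₃⟩ := E.faces_alternating_degeneracies_sub_eq_zero hy₁ hy₂
  exact E.mul_eq_zero_of_moore_four_trivial hNE4 (E.d_zero_s_s_eq_zero hx1) hz₁ hz₂ hz₃
end

section
/- Let E be a simplicial commutative k-algebra whose Moore complex satisfies NE_4 = 0. Then for all x_1 ∈ NE_1 and y_3 ∈ NE_3 the following identity holds in E_3: (s_1 s_0 x_1 − s_2 s_0 x_1) · (s_2 d_3 y_3 − y_3) = 0. -/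
namespace SimplicialCommAlg

variable {k : Type*} [CommRing k] {obj : ℕ → Type*} [∀ n, CommRing (obj n)]
  [∀ n, Algebra k (obj n)] (E : SimplicialCommAlg k obj)

theorem d_s_of_le {m i j : ℕ} (hij : i ≤ j) (hj : j ≤ m) (z : obj (m + 1)) :
    E.d (m + 1) i (E.s (m + 1) (j + 1) z) = E.s m j (E.d m i z) := by
  simpa using AlgHom.congr_fun (E.ds_lt m i (j + 1) (by omega) (by omega)) z

theorem d_s_self {n j : ℕ} (hj : j ≤ n) (z : obj n) : E.d n j (E.s n j z) = z := by
  simpa using AlgHom.congr_fun (E.ds_self n j hj) z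

theorem d_succ_s {n j : ℕ} (hj : j ≤ n) (z : obj n) : E.d n (j + 1) (E.s n j z) = z := by
  simpa using AlgHom.congr_fun (E.ds_succ n j hj) z

theorem d_succ_s_of_lt {m i j : ℕ} (hji : j < i) (hi : i ≤ m + 1) (z : obj (m + 1)) :
    E.d (m + 1) (i + 1) (E.s (m + 1) j z) = E.s m j (E.d m i z) := by
  simpa using AlgHom.congr_fun (E.ds_gt m (i + 1) j (by omega) (by omega)) z

theorem d_succ_s_sub_s_succ {n j : ℕ} (hj : j + 1 ≤ n) (b : obj n) :
    E.d n (j + 1) (E.s n j b - E.s n (j + 1) b) = 0 := by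
  rw [map_sub, E.d_succ_s (by omega), E.d_s_self hj, sub_self]

theorem mul_s_d_sub_eq_zero
    (hNE4 : ∀ w : obj 4, E.d 3 0 w = 0 → E.d 3 1 w = 0 →
      E.d 3 2 w = 0 → E.d 3 3 w = 0 → w = 0)
    {a y : obj 3} (ha : E.d 2 2 a = 0) (hy0 : E.d 2 0 y = 0) (hy1 : E.d 2 1 y = 0) :
    a * (E.s 2 2 (E.d 2 3 y) - y) = 0 := by
  have hw : E.s 3 3 a * (E.s 3 2 y - E.s 3 3 y) = 0 := by
    apply hNE4 <;> simp [d_s_of_le, d_s_self, d_succ_s, ha, hy0, hy1]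
  simpa [d_succ_s, d_succ_s_of_lt] using congrArg (E.d 3 4) hw

end SimplicialCommAlg

theorem stmt_8_general {k : Type*} [CommRing k] {obj : ℕ → Type*}
    [∀ n, CommRing (obj n)] [∀ n, Algebra k (obj n)]
    (E : SimplicialCommAlg k obj)
    (hNE4 : ∀ w : obj 4, E.d 3 0 w = 0 → E.d 3 1 w = 0 →
      E.d 3 2 w = 0 → E.d 3 3 w = 0 → w = 0)
    (x1 : obj 1) (y3 : obj 3) (hy3 : E.d 2 0 y3 = 0 ∧ E.d 2 1 y3 = 0 ∧ E.d 2 2 y3 = 0) :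
    (E.s 2 1 (E.s 1 0 x1) - E.s 2 2 (E.s 1 0 x1)) * (E.s 2 2 (E.d 2 3 y3) - y3) = 0 :=
  E.mul_s_d_sub_eq_zero hNE4 (E.d_succ_s_sub_s_succ (j := 1) le_rfl _) hy3.1 hy3.2.1

theorem stmt_8 {k : Type*} [CommRing k] {obj : ℕ → Type*}
    [∀ n, CommRing (obj n)] [∀ n, Algebra k (obj n)]
    (E : SimplicialCommAlg k obj)
    (hNE4 : ∀ w : obj 4, E.d 3 0 w = 0 → E.d 3 1 w = 0 →
      E.d 3 2 w = 0 → E.d 3 3 w = 0 → w = 0)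
    (x1 : obj 1) (hx1 : E.d 0 0 x1 = 0) (y3 : obj 3) (hy3 : E.d 2 0 y3 = 0 ∧ E.d 2 1 y3 = 0 ∧ E.d 2 2 y3 = 0) :
    (E.s 2 1 (E.s 1 0 x1) - E.s 2 2 (E.s 1 0 x1)) * (E.s 2 2 (E.d 2 3 y3) - y3) = 0 :=
  stmt_8_general E hNE4 x1 y3 hy3
end
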